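/- Let ν, μ be probability measures on ℝ^d with finite second moments, K, T > 0, and suppose X^ν_t, X^μ_t are flow maps with ρ_t = X^ν_t#ν, ρ'_t = X^μ_t#μ satisfying, for every coupling γ of (ν,μ) and γ-a.e. (x,y): |X^ν_t(x) − X^μ_t(y)| ≤ |x−y| + K ∫₀ᵗ (|X^ν_s(x) − X^μ_s(y)| + W₂(ρ_s, ρ'_s)) ds for all t ∈ [0,T]. Then there exists C depending only on K and T such that sup_{t∈[0,T]} W₂(ρ_t, ρ'_t) ≤ C · W₂(ν, μ). -/

import Mathlib

/-!
Dobrushin's coupling argument. Fix a coupling `γ` of `ν` and `μ` and write `a(x, y) = ‖x - y‖`,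
`f_s(x, y) = ‖Xν s x - Xμ s y‖` and `w_s = W₂(ρ_s, ρ'_s)`. Since `(Xν s × Xμ s)#γ` couples `ρ_s`
and `ρ'_s`, `w_s ≤ ‖f_s‖_{L²(γ)}`. Nothing is measurable in time, so the time integral of `w` is
replaced by its lower Lebesgue integral `ℓ(s) = ∫⁻_{(0,s]} w`. Grönwall along each trajectory gives
`f_s ≤ A a + B ℓ(s)`, hence `w_s ≤ 2Aρ + 2Bℓ(s)` with `ρ = ‖a‖_{L²(γ)}`, and a second Grönwall
bounds `ℓ`, so that `w_t ≤ Cρ` with `C` depending on `K` and `T` only. Taking the infimum over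
`γ` gives `w_t ≤ C W₂(ν, μ)`.
-/

open MeasureTheory Metric Real
open scoped ENNReal
noncomputable section

abbrev E (d : ℕ) := EuclideanSpace ℝ (Fin d)

/-- A coupling of two measures on `ℝ^d`. -/
def IsCoupling {d : ℕ} (γ : Measure (E d × E d)) (μ ν : Measure (E d)) : Prop :=
  γ.map Prod.fst = μ ∧ γ.map Prod.snd = ν

/-- The 2-Wasserstein distance on measures on `ℝ^d`. -/
def W2 {d : ℕ} (μ ν : Measure (E d)) : ℝ :=
  Real.sqrt (sInf { r : ℝ | ∃ γ : Measure (E d × E d), IsCoupling γ μ ν ∧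
    r = ∫ q, ‖q.1 - q.2‖ ^ 2 ∂γ })

open Set Filter Topology

theorem le_mul_exp_of_le_add_mul_integral {φ : ℝ → ℝ} {c B T : ℝ} (hB : 0 ≤ B)
    (hφ : IntervalIntegrable φ volume 0 T)
    (h : ∀ u ∈ Icc 0 T, φ u ≤ c + B * ∫ v in (0 : ℝ)..u, φ v) :
    ∀ u ∈ Icc 0 T, φ u ≤ c * exp (B * u) := by
  intro u hu
  have hT : 0 ≤ T := hu.1.trans hu.2
  have restrict {ψ : ℝ → ℝ} (hψ : IntervalIntegrable ψ volume 0 T) {x : ℝ} (hx : x ∈ Icc 0 T) :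
      IntervalIntegrable ψ volume 0 x :=
    hψ.mono_set (by rw [uIcc_of_le hT, uIcc_of_le hx.1]; exact Icc_subset_Icc_right hx.2)
  have primitive_continuousOn {ψ : ℝ → ℝ} (hψ : IntervalIntegrable ψ volume 0 T) :
      ContinuousOn (fun u => c + B * ∫ v in (0 : ℝ)..u, ψ v) (Icc 0 T) := by
    have := intervalIntegral.continuousOn_primitive_interval' hψ left_mem_uIcc
    rw [uIcc_of_le hT] at this
    fun_prop
  -- `Ψ ≥ φ` need not be differentiable, but `χ ≥ Ψ` is, with `χ' = B Ψ ≤ B χ`.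
  set Ψ := fun u => c + B * ∫ v in (0 : ℝ)..u, φ v
  set χ := fun u => c + B * ∫ v in (0 : ℝ)..u, Ψ v
  have hΨ : ContinuousOn Ψ (Icc 0 T) := primitive_continuousOn hφ
  have hΨi : IntervalIntegrable Ψ volume 0 T := hΨ.intervalIntegrable_of_Icc hT
  have hΨχ : ∀ x ∈ Icc 0 T, Ψ x ≤ χ x := fun x hx => by
    simp only [Ψ, χ]
    gcongr
    exact intervalIntegral.integral_mono_on hx.1 (restrict hφ hx) (restrict hΨi hx) fun v hv =>
      h v ⟨hv.1, hv.2.trans hx.2⟩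
  have hχ_deriv : ∀ x ∈ Ico 0 T, HasDerivWithinAt χ (B * Ψ x) (Ici x) x := by
    intro x hx
    have hnhds : Icc 0 T ∈ 𝓝[>] x :=
      mem_of_superset (Ico_mem_nhdsGT hx.2) (Ico_subset_Icc_self.trans (Icc_subset_Icc_left hx.1))
    have := intervalIntegral.integral_hasDerivWithinAt_right (s := Ici x) (t := Ioi x)
      (restrict hΨi (Ico_subset_Icc_self hx))
      ((hΨ.stronglyMeasurableAtFilter_nhdsWithin measurableSet_Icc x).filter_mono
        (nhdsWithin_le_of_mem hnhds))
      ((hΨ x (Ico_subset_Icc_self hx)).mono_of_mem_nhdsWithin hnhds)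
    exact (this.const_mul B).const_add c
  have hχ := le_gronwallBound_of_liminf_deriv_right_le (δ := c) (K := B) (ε := 0)
    (primitive_continuousOn hΨi)
    (fun x hx r hr => by
      simpa only [slope_def_field, div_eq_inv_mul] using (hχ_deriv x hx).liminf_right_slope_le hr)
    (by simp)
    (fun x hx => by simpa using mul_le_mul_of_nonneg_left (hΨχ x (Ico_subset_Icc_self hx)) hB) u hu
  rw [gronwallBound_ε0, sub_zero] at hχ
  exact (h u hu).trans ((hΨχ u hu).trans hχ)

theorem ofReal_integral_le_ofReal_integral_add_lintegral {α : Type*} [MeasurableSpace α]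
    {μ : Measure α} {g φ w : α → ℝ} (hg : Integrable g μ) (hg0 : 0 ≤ᵐ[μ] g)
    (hφ : Integrable φ μ) (hφ0 : 0 ≤ᵐ[μ] φ) (hle : ∀ᵐ x ∂μ, g x ≤ φ x + w x) :
    ENNReal.ofReal (∫ x, g x ∂μ) ≤
      ENNReal.ofReal (∫ x, φ x ∂μ) + ∫⁻ x, ENNReal.ofReal (w x) ∂μ := by
  rw [ofReal_integral_eq_lintegral_ofReal hg hg0, ofReal_integral_eq_lintegral_ofReal hφ hφ0,
    ← lintegral_add_left' hφ.aemeasurable.ennreal_ofReal]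
  exact lintegral_mono_ae <| hle.mono fun x hx =>
    (ENNReal.ofReal_le_ofReal hx).trans ENNReal.ofReal_add_le

theorem le_add_mul_exp_of_le_add_mul_integral_add {f w : ℝ → ℝ} {a K s : ℝ} (hK : 0 ≤ K)
    (ha : 0 ≤ a) (hs : 0 ≤ s) (hf : ∀ u, 0 ≤ f u) (hw : ∀ u, 0 ≤ w u)
    (hint : IntervalIntegrable (fun u => f u + w u) volume 0 s)
    (h : ∀ u ∈ Icc 0 s, f u ≤ a + K * ∫ v in (0 : ℝ)..u, (f v + w v)) :
    f s ≤ a + K * ((a * s + (∫⁻ u in Ioc 0 s, ENNReal.ofReal (w u)).toReal) * exp (K * s)) := by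
  set G := fun u => ∫ v in (0 : ℝ)..u, (f v + w v)
  set L := ∫⁻ u in Ioc 0 s, ENNReal.ofReal (w u)
  have hfw0 : ∀ v, 0 ≤ f v + w v := fun v => add_nonneg (hf v) (hw v)
  have hG0 : ∀ u, 0 ≤ u → 0 ≤ G u := fun u hu =>
    intervalIntegral.integral_nonneg hu fun v _ => hfw0 v
  have hGc : ContinuousOn G (Icc 0 s) := by
    simpa only [uIcc_of_le hs] using
      intervalIntegral.continuousOn_primitive_interval' hint left_mem_uIcc
  have hGi : ∀ u ∈ Icc 0 s, IntervalIntegrable G volume 0 u := fun u hu =>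
    (hGc.mono (Icc_subset_Icc_right hu.2)).intervalIntegrable_of_Icc hu.1
  have hL : L ≠ ∞ := by
    refine ne_top_of_le_ne_top (ENNReal.ofReal_ne_top (r := G s)) ?_
    show L ≤ ENNReal.ofReal (∫ v in (0 : ℝ)..s, (f v + w v))
    rw [intervalIntegral.integral_of_le hs, ofReal_integral_eq_lintegral_ofReal hint.1
      (ae_of_all _ hfw0)]
    exact setLIntegral_mono' measurableSet_Ioc fun v _ =>
      ENNReal.ofReal_le_ofReal (le_add_of_nonneg_left (hf v))
  have hG : ∀ u ∈ Icc 0 s, G u ≤ (a * s + L.toReal) + K * ∫ v in (0 : ℝ)..u, G v := by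
    intro u hu
    have hφ : IntervalIntegrable (fun v => a + K * G v) volume 0 u :=
      intervalIntegrable_const.add ((hGi u hu).const_mul K)
    have hle := ofReal_integral_le_ofReal_integral_add_lintegral
      (hint.1.mono_set (Ioc_subset_Ioc_right hu.2)) (ae_of_all _ hfw0) hφ.1
      (ae_restrict_of_forall_mem measurableSet_Ioc fun v hv =>
        add_nonneg ha (mul_nonneg hK (hG0 v hv.1.le)))
      (ae_restrict_of_forall_mem measurableSet_Ioc fun v hv =>
        add_le_add_left (h v ⟨hv.1.le, hv.2.trans hu.2⟩) (w v))
    replace hle : ENNReal.ofReal (G u) ≤ ENNReal.ofReal (∫ v in (0 : ℝ)..u, (a + K * G v)) + L := by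
      show ENNReal.ofReal (∫ v in (0 : ℝ)..u, (f v + w v)) ≤ _
      rw [intervalIntegral.integral_of_le hu.1, intervalIntegral.integral_of_le hu.1]
      exact hle.trans (add_le_add_right (lintegral_mono_set (Ioc_subset_Ioc_right hu.2)) _)
    have hsum_nonneg : 0 ≤ u * a + K * ∫ v in (0 : ℝ)..u, G v := add_nonneg (mul_nonneg hu.1 ha)
      (mul_nonneg hK (intervalIntegral.integral_nonneg hu.1 fun v hv => hG0 v hv.1))
    rw [intervalIntegral.integral_add intervalIntegrable_const ((hGi u hu).const_mul K),
      intervalIntegral.integral_const_mul, intervalIntegral.integral_const, smul_eq_mul, sub_zero,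
      ← ENNReal.ofReal_toReal hL, ← ENNReal.ofReal_add hsum_nonneg ENNReal.toReal_nonneg,
      ENNReal.ofReal_le_ofReal_iff (add_nonneg hsum_nonneg ENNReal.toReal_nonneg)] at hle
    nlinarith [mul_le_mul_of_nonneg_left hu.2 ha]
  have hGs := le_mul_exp_of_le_add_mul_integral hK (hGc.intervalIntegrable_of_Icc hs) hG s
    ⟨hs, le_rfl⟩
  calc f s ≤ a + K * G s := h s ⟨hs, le_rfl⟩
    _ ≤ _ := by gcongr

theorem toReal_setLIntegral_le_mul_exp {w : ℝ → ℝ} {c B T : ℝ} (hB : 0 ≤ B) (hc : 0 ≤ c)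
    (hw : ∀ s ∈ Icc 0 T, w s ≤ c + B * (∫⁻ u in Ioc 0 s, ENNReal.ofReal (w u)).toReal) :
    ∀ s ∈ Icc 0 T, (∫⁻ u in Ioc 0 s, ENNReal.ofReal (w u)).toReal ≤ c * s * exp (B * s) := by
  intro s hs
  set L := fun s => ∫⁻ u in Ioc 0 s, ENNReal.ofReal (w u)
  by_cases hLs : L s = ∞
  · show (L s).toReal ≤ _
    rw [hLs, ENNReal.toReal_top]
    exact mul_nonneg (mul_nonneg hc hs.1) (exp_pos _).le
  have hL_mono : Monotone L := fun u v huv => lintegral_mono_set (Ioc_subset_Ioc_right huv)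
  have hℓ_mono : MonotoneOn (fun u => (L u).toReal) (Icc 0 s) := fun u _ v hv huv =>
    ENNReal.toReal_mono (ne_top_of_le_ne_top hLs (hL_mono hv.2)) (hL_mono huv)
  have hℓi : ∀ u ∈ Icc 0 s, IntervalIntegrable (fun u => (L u).toReal) volume 0 u := fun u hu =>
    (hℓ_mono.mono (by rw [uIcc_of_le hu.1]; exact Icc_subset_Icc_right hu.2)).intervalIntegrable
  refine le_mul_exp_of_le_add_mul_integral hB (hℓi s ⟨hs.1, le_rfl⟩) (fun u hu => ?_) s
    ⟨hs.1, le_rfl⟩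
  have hψ : IntervalIntegrable (fun v => c + B * (L v).toReal) volume 0 u :=
    intervalIntegrable_const.add ((hℓi u hu).const_mul B)
  have hLu : L u ≤ ENNReal.ofReal (∫ v in (0 : ℝ)..u, (c + B * (L v).toReal)) := by
    rw [intervalIntegral.integral_of_le hu.1, ofReal_integral_eq_lintegral_ofReal hψ.1
      (ae_of_all _ fun v => add_nonneg hc (mul_nonneg hB ENNReal.toReal_nonneg))]
    exact setLIntegral_mono' measurableSet_Ioc fun v hv =>
      ENNReal.ofReal_le_ofReal (hw v ⟨hv.1.le, hv.2.trans (hu.2.trans hs.2)⟩)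
  rw [intervalIntegral.integral_add intervalIntegrable_const ((hℓi u hu).const_mul B),
    intervalIntegral.integral_const_mul, intervalIntegral.integral_const, smul_eq_mul,
    sub_zero] at hLu
  have := ENNReal.toReal_le_of_le_ofReal (add_nonneg (mul_nonneg hu.1 hc)
    (mul_nonneg hB (intervalIntegral.integral_nonneg hu.1 fun _ _ => ENNReal.toReal_nonneg))) hLu
  nlinarith [mul_le_mul_of_nonneg_left hu.2 hc]

theorem sqrt_integral_sq_le_of_ae_le {α : Type*} [MeasurableSpace α] {γ : Measure α}
    [IsProbabilityMeasure γ] {h a : α → ℝ} {c₁ c₂ : ℝ} (hc₁ : 0 ≤ c₁) (hc₂ : 0 ≤ c₂)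
    (ha : Integrable (fun q => a q ^ 2) γ) (h0 : ∀ q, 0 ≤ h q)
    (hle : ∀ᵐ q ∂γ, h q ≤ c₁ * a q + c₂) :
    √(∫ q, h q ^ 2 ∂γ) ≤ 2 * (c₁ * √(∫ q, a q ^ 2 ∂γ) + c₂) := by
  have hr : 0 ≤ ∫ q, a q ^ 2 ∂γ := integral_nonneg fun q => sq_nonneg _
  rw [Real.sqrt_le_iff]
  refine ⟨by positivity, ?_⟩
  calc ∫ q, h q ^ 2 ∂γ ≤ ∫ q, (2 * c₁ ^ 2 * a q ^ 2 + 2 * c₂ ^ 2) ∂γ := by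
        refine integral_mono_of_nonneg (ae_of_all _ fun q => sq_nonneg _)
          ((ha.const_mul _).add (integrable_const _)) ?_
        filter_upwards [hle] with q hq
        nlinarith [mul_self_le_mul_self (h0 q) hq, sq_nonneg (c₁ * a q - c₂)]
    _ = 2 * c₁ ^ 2 * ∫ q, a q ^ 2 ∂γ + 2 * c₂ ^ 2 := by
        rw [integral_add (ha.const_mul _) (integrable_const _), integral_const_mul,
          integral_const, probReal_univ, one_smul]
    _ ≤ (2 * (c₁ * √(∫ q, a q ^ 2 ∂γ) + c₂)) ^ 2 := by
        nlinarith [Real.sq_sqrt hr, Real.sqrt_nonneg (∫ q, a q ^ 2 ∂γ),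
          mul_nonneg hc₁ hc₂, mul_nonneg (mul_nonneg hc₁ hc₂) (Real.sqrt_nonneg (∫ q, a q ^ 2 ∂γ))]

def dobrushinConstant (K T : ℝ) : ℝ :=
  2 * (1 + K * T * exp (K * T)) * (1 + 2 * (K * exp (K * T)) * T * exp (2 * (K * exp (K * T)) * T))

theorem dobrushinConstant_pos {K T : ℝ} (hK : 0 ≤ K) (hT : 0 ≤ T) : 0 < dobrushinConstant K T := by
  unfold dobrushinConstant; positivity

theorem dobrushin_gronwall {α : Type*} [MeasurableSpace α] {γ : Measure α}
    [IsProbabilityMeasure γ] {f : ℝ → α → ℝ} {w : ℝ → ℝ} {a : α → ℝ} {K T : ℝ} (hK : 0 ≤ K)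
    (hf : ∀ s q, 0 ≤ f s q) (hw0 : ∀ s, 0 ≤ w s) (ha : ∀ q, 0 ≤ a q)
    (ha2 : Integrable (fun q => a q ^ 2) γ) (hw : ∀ s ∈ Icc 0 T, w s ≤ √(∫ q, f s q ^ 2 ∂γ))
    (hflow : ∀ᵐ q ∂γ, ∀ t ∈ Icc 0 T, f t q ≤ a q + K * ∫ s in (0 : ℝ)..t, (f s q + w s)) :
    ∀ t ∈ Icc 0 T, w t ≤ dobrushinConstant K T * √(∫ q, a q ^ 2 ∂γ) := by
  intro t ht
  have hT : 0 ≤ T := ht.1.trans ht.2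
  set A := 1 + K * T * exp (K * T)
  set B := K * exp (K * T)
  set ρ := √(∫ q, a q ^ 2 ∂γ)
  set ℓ := fun s => (∫⁻ u in Ioc 0 s, ENNReal.ofReal (w u)).toReal
  have hA : 1 ≤ A := le_add_of_nonneg_right (by positivity)
  have hB : 0 ≤ B := by positivity
  have hℓ0 : ∀ s, 0 ≤ ℓ s := fun _ => ENNReal.toReal_nonneg
  have hf_bound : ∀ s ∈ Icc 0 T, ∀ᵐ q ∂γ, f s q ≤ A * a q + B * ℓ s := by
    intro s hs
    filter_upwards [hflow] with q hq
    by_cases hint : IntervalIntegrable (fun u => f u q + w u) volume 0 s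
    · calc f s q ≤ a q + K * ((a q * s + ℓ s) * exp (K * s)) :=
            le_add_mul_exp_of_le_add_mul_integral_add hK (ha q) hs.1 (fun u => hf u q) hw0 hint
              fun u hu => hq u ⟨hu.1, hu.2.trans hs.2⟩
        _ ≤ a q + K * ((a q * T + ℓ s) * exp (K * T)) := by
            have := ha q
            have := hℓ0 s
            gcongr <;> exact hs.2
        _ = A * a q + B * ℓ s := by ring
    · -- a non-integrable integrand has interval integral `0`
      have := hq s hs
      rw [intervalIntegral.integral_undef hint, mul_zero, add_zero] at this
      nlinarith [ha q, mul_nonneg hB (hℓ0 s)]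
  have hw_bound : ∀ s ∈ Icc 0 T, w s ≤ 2 * A * ρ + 2 * B * ℓ s := fun s hs =>
    ((hw s hs).trans (sqrt_integral_sq_le_of_ae_le (by positivity) (by positivity) ha2 (hf s)
      (hf_bound s hs))).trans_eq (by ring)
  have hℓ := toReal_setLIntegral_le_mul_exp (by positivity) (by positivity) hw_bound t ht
  calc w t ≤ 2 * A * ρ + 2 * B * ℓ t := hw_bound t ht
    _ ≤ 2 * A * ρ + 2 * B * (2 * A * ρ * T * exp (2 * B * T)) := by
        gcongr
        exact hℓ.trans (by gcongr; exact ht.2; exact ht.2)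
    _ = dobrushinConstant K T * ρ := by unfold dobrushinConstant; ring

section Wasserstein

variable {d : ℕ} {μ ν : Measure (E d)} {γ : Measure (E d × E d)}

theorem W2_nonneg (μ ν : Measure (E d)) : 0 ≤ W2 μ ν := Real.sqrt_nonneg _

theorem IsCoupling.W2_le (hγ : IsCoupling γ μ ν) : W2 μ ν ≤ √(∫ q, ‖q.1 - q.2‖ ^ 2 ∂γ) :=
  Real.sqrt_le_sqrt <| csInf_le ⟨0, by rintro _ ⟨γ, -, rfl⟩; positivity⟩ ⟨γ, hγ, rfl⟩

theorem le_W2_of_forall_isCoupling [IsProbabilityMeasure μ] [IsProbabilityMeasure ν] {x : ℝ}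
    (h : ∀ γ, IsCoupling γ μ ν → x ≤ √(∫ q, ‖q.1 - q.2‖ ^ 2 ∂γ)) : x ≤ W2 μ ν := by
  rcases le_or_gt x 0 with hx | hx
  · exact hx.trans (W2_nonneg μ ν)
  refine Real.le_sqrt_of_sq_le (le_csInf ⟨_, μ.prod ν, ⟨by simp, by simp⟩, rfl⟩ ?_)
  rintro _ ⟨γ, hγ, rfl⟩
  exact (Real.le_sqrt hx.le (by positivity)).1 (h γ hγ)

theorem le_mul_W2_of_forall_isCoupling [IsProbabilityMeasure μ] [IsProbabilityMeasure ν]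
    {x C : ℝ} (hC : 0 < C) (h : ∀ γ, IsCoupling γ μ ν → x ≤ C * √(∫ q, ‖q.1 - q.2‖ ^ 2 ∂γ)) :
    x ≤ C * W2 μ ν := by
  rw [← div_le_iff₀' hC]
  exact le_W2_of_forall_isCoupling fun γ hγ => (div_le_iff₀' hC).2 (h γ hγ)

theorem W2_eq_zero_of_forall_isCoupling (h : ∀ γ, IsCoupling γ μ ν → γ = 0) : W2 μ ν = 0 := by
  have hsub : { r : ℝ | ∃ γ : Measure (E d × E d), IsCoupling γ μ ν ∧
      r = ∫ q, ‖q.1 - q.2‖ ^ 2 ∂γ } ⊆ {0} := by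
    rintro _ ⟨γ, hγ, rfl⟩
    simp [h γ hγ]
  rcases Set.subset_singleton_iff_eq.1 hsub with hS | hS <;> simp [W2, hS]

theorem W2_zero_left (ν : Measure (E d)) : W2 0 ν = 0 :=
  W2_eq_zero_of_forall_isCoupling fun _ hγ =>
    (Measure.map_eq_zero_iff measurable_fst.aemeasurable).1 hγ.1

theorem W2_zero_right (μ : Measure (E d)) : W2 μ 0 = 0 :=
  W2_eq_zero_of_forall_isCoupling fun _ hγ =>
    (Measure.map_eq_zero_iff measurable_snd.aemeasurable).1 hγ.2

theorem IsCoupling.aemeasurable_prodMap (hγ : IsCoupling γ μ ν) {F G : E d → E d}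
    (hF : AEMeasurable F μ) (hG : AEMeasurable G ν) : AEMeasurable (Prod.map F G) γ := by
  rw [← hγ.1] at hF
  rw [← hγ.2] at hG
  exact (hF.comp_aemeasurable measurable_fst.aemeasurable).prodMk
    (hG.comp_aemeasurable measurable_snd.aemeasurable)

theorem IsCoupling.map_prodMap (hγ : IsCoupling γ μ ν) {F G : E d → E d}
    (hF : AEMeasurable F μ) (hG : AEMeasurable G ν) :
    IsCoupling (γ.map (Prod.map F G)) (μ.map F) (ν.map G) := by
  have hFG := hγ.aemeasurable_prodMap hF hG
  rw [← hγ.1] at hF ⊢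
  rw [← hγ.2] at hG ⊢
  constructor
  · rw [AEMeasurable.map_map_of_aemeasurable measurable_fst.aemeasurable hFG,
      AEMeasurable.map_map_of_aemeasurable hF measurable_fst.aemeasurable]
    rfl
  · rw [AEMeasurable.map_map_of_aemeasurable measurable_snd.aemeasurable hFG,
      AEMeasurable.map_map_of_aemeasurable hG measurable_snd.aemeasurable]
    rfl

theorem IsCoupling.W2_map_le (hγ : IsCoupling γ μ ν) (F G : E d → E d) :
    W2 (μ.map F) (ν.map G) ≤ √(∫ q, ‖F q.1 - G q.2‖ ^ 2 ∂γ) := by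
  by_cases hF : AEMeasurable F μ
  · by_cases hG : AEMeasurable G ν
    · have := (hγ.map_prodMap hF hG).W2_le
      rwa [integral_map (hγ.aemeasurable_prodMap hF hG) (by fun_prop)] at this
    · rw [Measure.map_of_not_aemeasurable hG, W2_zero_right]; positivity
  · rw [Measure.map_of_not_aemeasurable hF, W2_zero_left]; positivity

theorem IsCoupling.isProbabilityMeasure [IsProbabilityMeasure μ] (hγ : IsCoupling γ μ ν) :
    IsProbabilityMeasure γ := by
  have : IsProbabilityMeasure (γ.map Prod.fst) := hγ.1 ▸ inferInstance
  exact Measure.isProbabilityMeasure_of_map Prod.fst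

theorem IsCoupling.integrable_norm_sub_sq (hγ : IsCoupling γ μ ν)
    (hμ : Integrable (fun x => ‖x‖ ^ 2) μ) (hν : Integrable (fun x => ‖x‖ ^ 2) ν) :
    Integrable (fun q : E d × E d => ‖q.1 - q.2‖ ^ 2) γ := by
  rw [← hγ.1] at hμ; rw [← hγ.2] at hν
  refine Integrable.mono' (((hμ.comp_measurable measurable_fst).const_mul 2).add
    ((hν.comp_measurable measurable_snd).const_mul 2)) (by fun_prop) (ae_of_all _ fun q => ?_)
  have := norm_sub_le q.1 q.2
  simp only [norm_pow, norm_norm, Pi.add_apply, Function.comp_apply]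
  nlinarith [mul_self_le_mul_self (norm_nonneg _) this, sq_nonneg (‖q.1‖ - ‖q.2‖)]

end Wasserstein

/-- Dobrushin coupling estimate: stability of pushforwards of flows with respect to the
initial measures in Wasserstein distance, with constant depending only on `K` and `T`. -/
theorem dobrushin_stability (K T : ℝ) (hK : 0 < K) (hT : 0 < T) :
    ∃ C : ℝ, 0 < C ∧ ∀ (d : ℕ) (ν μ : Measure (E d)),
      IsProbabilityMeasure ν → IsProbabilityMeasure μ →
      Integrable (fun x => ‖x‖ ^ 2) ν → Integrable (fun x => ‖x‖ ^ 2) μ →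
      ∀ Xν Xμ : ℝ → E d → E d,
      (∀ γ : Measure (E d × E d), IsCoupling γ ν μ →
        ∀ᵐ q ∂γ, ∀ t ∈ Set.Icc (0 : ℝ) T,
          ‖Xν t q.1 - Xμ t q.2‖ ≤ ‖q.1 - q.2‖ +
            K * ∫ s in (0 : ℝ)..t,
              (‖Xν s q.1 - Xμ s q.2‖ + W2 (ν.map (Xν s)) (μ.map (Xμ s)))) →
      ∀ t ∈ Set.Icc (0 : ℝ) T,
        W2 (ν.map (Xν t)) (μ.map (Xμ t)) ≤ C * W2 ν μ := by
  have hC := dobrushinConstant_pos hK.le hT.le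
  refine ⟨dobrushinConstant K T, hC, fun d ν μ hν hμ h2ν h2μ Xν Xμ H t ht => ?_⟩
  refine le_mul_W2_of_forall_isCoupling hC fun γ hγ => ?_
  have := hγ.isProbabilityMeasure
  exact dobrushin_gronwall hK.le (fun _ _ => norm_nonneg _) (fun _ => W2_nonneg _ _)
    (fun _ => norm_nonneg _) (hγ.integrable_norm_sub_sq h2ν h2μ)
    (fun s _ => hγ.W2_map_le (Xν s) (Xμ s)) (H γ hγ) t ht
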